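/- arXiv:2412.19463 — 10 statements merged into one kernel-verified Lean document; each statement's English description precedes it below -/
import Mathlib

section
/- Let A and B be n×n complex matrices. Then there exists c ∈ ℂ with |c| = 1 and A·B = c • B if and only if for every positive semidefinite n×n complex matrix ρ one has (A·B)·ρ·(A·B)ᴴ = B·ρ·Bᴴ. -/
/-!
Positive semidefinite matrices span all matrices, so the hypothesis extends by linearity to the
matrix units `ρ = E_kl`, giving `(AB)_ik * conj (AB)_jl = B_ik * conj B_jl` for all indices.
Comparing with a nonzero entry `B_jl` shows that such an identity forces `AB = c • B` with
`c = (AB)_jl / B_jl` unimodular.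
-/

open Matrix ComplexOrder

open scoped MatrixOrder Matrix.Norms.L2Operator in
theorem Matrix.span_posSemidef_eq_top {n : Type*} [Fintype n] [DecidableEq n] :
    Submodule.span ℂ {ρ : Matrix n n ℂ | ρ.PosSemidef} = ⊤ := by
  simpa only [nonneg_iff_posSemidef] using CStarAlgebra.span_nonneg (A := Matrix n n ℂ)

theorem Matrix.mul_single_one_mul_conjTranspose_apply {m n : Type*} [Fintype n] [DecidableEq n]
    (M : Matrix m n ℂ) (k l : n) (i j : m) :
    (M * single k l (1 : ℂ) * Mᴴ) i j = M i k * star (M j l) := by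
  simp [mul_apply, single_apply, ite_and]

theorem Matrix.mul_mul_conjTranspose_eq_of_forall_posSemidef {m n : Type*} [Fintype n]
    [DecidableEq n] {M N : Matrix m n ℂ}
    (h : ∀ ρ : Matrix n n ℂ, ρ.PosSemidef → M * ρ * Mᴴ = N * ρ * Nᴴ) (X : Matrix n n ℂ) :
    M * X * Mᴴ = N * X * Nᴴ :=
  LinearMap.congr_fun (LinearMap.ext_on span_posSemidef_eq_top
    (f := mulRightLinearMap m ℂ Mᴴ ∘ₗ mulLeftLinearMap n ℂ M)
    (g := mulRightLinearMap m ℂ Nᴴ ∘ₗ mulLeftLinearMap n ℂ N) h) X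

theorem Complex.exists_norm_eq_one_and_eq_smul_of_mul_star_eq {α : Type*} {f g : α → ℂ}
    (h : ∀ x y, f x * star (f y) = g x * star (g y)) : ∃ c : ℂ, ‖c‖ = 1 ∧ f = c • g := by
  have hnorm (x : α) : ‖f x‖ = ‖g x‖ := by
    have hx := h x x
    simp only [star_def, mul_conj'] at hx
    exact (sq_eq_sq₀ (norm_nonneg _) (norm_nonneg _)).1 (by exact_mod_cast hx)
  by_cases hg : g = 0
  · refine ⟨1, norm_one, funext fun x => ?_⟩
    simpa [hg] using hnorm x
  obtain ⟨y, hy⟩ := Function.ne_iff.1 hg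
  refine ⟨f y / g y, by rw [norm_div, hnorm, div_self (norm_ne_zero_iff.2 hy)],
    funext fun x => ?_⟩
  change f x = f y / g y * g x
  rw [div_mul_eq_mul_div, eq_div_iff hy]
  apply mul_right_cancel₀ (star_ne_zero.2 hy)
  linear_combination f y * h x y - f x * h y y

theorem left_absorb_iff_semantics {n : ℕ} (A B : Matrix (Fin n) (Fin n) ℂ) :
    (∃ c : ℂ, ‖c‖ = 1 ∧ A * B = c • B) ↔
      (∀ ρ : Matrix (Fin n) (Fin n) ℂ, ρ.PosSemidef →
        (A * B) * ρ * (A * B)ᴴ = B * ρ * Bᴴ) := by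
  constructor
  · rintro ⟨c, hc, hAB⟩ ρ -
    have hcc : c * star c = 1 := by
      rw [Complex.star_def, Complex.mul_conj', hc, Complex.ofReal_one, one_pow]
    rw [hAB, conjTranspose_smul, smul_mul_assoc, smul_mul_assoc, mul_smul_comm, smul_smul, hcc,
      one_smul]
  · intro h
    have hentries (p q : Fin n × Fin n) :
        (A * B) p.1 p.2 * star ((A * B) q.1 q.2) = B p.1 p.2 * star (B q.1 q.2) := by
      simpa only [mul_single_one_mul_conjTranspose_apply] using
        congr_fun₂ (mul_mul_conjTranspose_eq_of_forall_posSemidef h (single p.2 q.2 1)) p.1 q.1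
    obtain ⟨c, hc, hcAB⟩ := Complex.exists_norm_eq_one_and_eq_smul_of_mul_star_eq hentries
    exact ⟨c, hc, ext fun i k => congr_fun hcAB (i, k)⟩
end

section
/- Let k ≥ 1 and let (M_i)_{i ∈ Fin k} be a family of n×n complex matrices with ∑_i M_iᴴ·M_i = I. Then there exists a unitary matrix U indexed by (Fin n × Fin k) — i.e. U ∈ Matrix.unitaryGroup (Fin n × Fin k) ℂ — such that for every vector ψ ∈ ℂⁿ, U·(ψ ⊗ e₀) = ∑_i (M_i·ψ) ⊗ e_i; explicitly, (U.mulVec (fun (a,b) => ψ a * (if b = 0 then 1 else 0))) (a, i) = ((M_i).mulVec ψ) a for all a ∈ Fin n and i ∈ Fin k. -/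
/-!
Stacking the operators `M i` gives the matrix `V` with `V ψ = ∑ i, (M i ψ) ⊗ eᵢ`, and
`Vᴴ V = ∑ i, (M i)ᴴ M i = 1` says that its columns are orthonormal. Placing them at the
positions `(c, 0)` and completing them to an orthonormal basis of `ℂ^(n × k)` gives the
columns of a unitary `U`, and `U (ψ ⊗ e₀)` only sees those columns.
-/

open Matrix

section Extension

variable {𝕜 E : Type*} [RCLike 𝕜] [NormedAddCommGroup E] [InnerProductSpace 𝕜 E]
  [FiniteDimensional 𝕜 E]

theorem Orthonormal.exists_orthonormalBasis_extension_of_embedding {ι κ : Type*} [Fintype ι]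
    (card_ι : Module.finrank 𝕜 E = Fintype.card ι) (e : κ ↪ ι) {w : κ → E}
    (hw : Orthonormal 𝕜 w) : ∃ b : OrthonormalBasis ι 𝕜 E, ∀ j, b (e j) = w j := by
  let v : ι → E := Function.extend e w 0
  have hv : ∀ j, v (e j) = w j := fun j => e.injective.extend_apply w 0 j
  let r : κ ≃ Set.range e := Equiv.ofInjective e e.injective
  have hrestrict : (Set.range e).domRestrict v ∘ r = w := funext fun j => hv j
  have hon : Orthonormal 𝕜 ((Set.range e).domRestrict v) := by
    have := hw.comp r.symm r.symm.injective
    rwa [← hrestrict, Function.comp_assoc, r.self_comp_symm, Function.comp_id] at this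
  obtain ⟨b, hb⟩ := hon.exists_orthonormalBasis_extension_of_card_eq card_ι
  exact ⟨b, fun j => (hb (e j) ⟨j, rfl⟩).trans (hv j)⟩

end Extension

namespace Matrix

variable {𝕜 : Type*} [RCLike 𝕜] {l m n ι α : Type*}

theorem orthonormal_toLp_transpose_iff [Fintype n] [DecidableEq m]
    {V : Matrix n m 𝕜} :
    Orthonormal 𝕜 (fun j => WithLp.toLp 2 (Vᵀ j)) ↔ Vᴴ * V = 1 := by
  rw [← gram_eq_one_iff_orthonormal, gram_eq_conjTranspose_mul (EuclideanSpace.basisFun n 𝕜)]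
  rfl

theorem exists_mem_unitaryGroup_submatrix_eq [Fintype n] [DecidableEq n]
    [DecidableEq m] (e : m ↪ n) {V : Matrix n m 𝕜} (hV : Vᴴ * V = 1) :
    ∃ U ∈ unitaryGroup n 𝕜, U.submatrix id e = V := by
  obtain ⟨b, hb⟩ := (orthonormal_toLp_transpose_iff.mpr hV)
    |>.exists_orthonormalBasis_extension_of_embedding finrank_euclideanSpace e
  refine ⟨(EuclideanSpace.basisFun n 𝕜).toBasis.toMatrix b,
    (EuclideanSpace.basisFun n 𝕜).toMatrix_orthonormalBasis_mem_unitary b, ?_⟩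
  ext i j
  simp [Module.Basis.toMatrix_apply, hb]

def stack (M : ι → Matrix m n α) : Matrix (m × ι) n α :=
  of fun q c => M q.2 q.1 c

theorem conjTranspose_stack_mul_stack [Fintype m] [Fintype ι] [NonUnitalSemiring α] [StarRing α]
    (M : ι → Matrix m n α) : (stack M)ᴴ * stack M = ∑ i, (M i)ᴴ * M i := by
  ext c d
  simp [stack, mul_apply, sum_apply, Fintype.sum_prod_type, Finset.sum_comm (γ := m)]

theorem stack_mulVec_apply [Fintype n] [NonUnitalNonAssocSemiring α] (M : ι → Matrix m n α)
    (ψ : n → α) (a : m) (i : ι) : (stack M *ᵥ ψ) (a, i) = (M i *ᵥ ψ) a :=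
  rfl

theorem mulVec_mul_ite_snd_eq [Fintype m] [Fintype ι] [DecidableEq ι] [NonAssocSemiring α]
    (U : Matrix l (m × ι) α) (ψ : m → α) (z : ι) :
    U *ᵥ (fun p => ψ p.1 * if p.2 = z then 1 else 0) =
      U.submatrix id (Function.Embedding.sectL m z) *ᵥ ψ := by
  ext a
  simp [mulVec, dotProduct, Fintype.sum_prod_type]

end Matrix

theorem measurement_dilation {n k : ℕ} (hk : 1 ≤ k)
    (M : Fin k → Matrix (Fin n) (Fin n) ℂ)
    (hmeas : ∑ i, (M i)ᴴ * M i = 1) :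
    ∃ U : Matrix (Fin n × Fin k) (Fin n × Fin k) ℂ,
      U ∈ Matrix.unitaryGroup (Fin n × Fin k) ℂ ∧
      ∀ (ψ : Fin n → ℂ) (a : Fin n) (i : Fin k),
        U.mulVec (fun p => ψ p.1 * (if p.2 = (⟨0, hk⟩ : Fin k) then 1 else 0)) (a, i)
          = (M i).mulVec ψ a := by
  obtain ⟨U, hU, hUV⟩ := exists_mem_unitaryGroup_submatrix_eq
    (Function.Embedding.sectL (Fin n) (⟨0, hk⟩ : Fin k))
    ((conjTranspose_stack_mul_stack M).trans hmeas)
  refine ⟨U, hU, fun ψ a i => ?_⟩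
  rw [mulVec_mul_ite_snd_eq, hUV, stack_mulVec_apply]
end

section
/- Let ι and κ be finite types, let (M_m)_{m∈ι} be n×n complex matrices with ∑_m M_mᴴ·M_m = I, let (U_m)_{m∈ι} be n×n matrices each satisfying U_mᴴ·U_m = I (unitary), and let (N_k)_{k∈κ} be n×n matrices with ∑_k N_kᴴ·N_k = I. Then the family K_{m,k} := N_k·U_m·M_m is again a quantum measurement: ∑_{m∈ι} ∑_{k∈κ} K_{m,k}ᴴ·K_{m,k} = I. -/
open Matrix

theorem sequential_composition_measurement {n : ℕ} {ι κ : Type*} [Fintype ι] [Fintype κ]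
    (M : ι → Matrix (Fin n) (Fin n) ℂ)
    (U : ι → Matrix (Fin n) (Fin n) ℂ)
    (N : κ → Matrix (Fin n) (Fin n) ℂ)
    (hM : ∑ m, (M m)ᴴ * M m = 1)
    (hU : ∀ m, (U m)ᴴ * U m = 1)
    (hN : ∑ j, (N j)ᴴ * N j = 1) :
    ∑ m, ∑ j, (N j * U m * M m)ᴴ * (N j * U m * M m) = 1 := by
  have h : ∀ m, ∑ j, (N j * U m * M m)ᴴ * (N j * U m * M m) = (M m)ᴴ * M m := by
    intro m
    have : ∑ j, (N j * U m * M m)ᴴ * (N j * U m * M m)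
        = (M m)ᴴ * ((U m)ᴴ * ((∑ j, (N j)ᴴ * N j) * (U m * M m))) := by
      rw [Finset.sum_mul, Finset.mul_sum, Finset.mul_sum]
      refine Finset.sum_congr rfl fun j _ => ?_
      simp [conjTranspose_mul, Matrix.mul_assoc]
    rw [this, hN, Matrix.one_mul, ← Matrix.mul_assoc, ← Matrix.mul_assoc, Matrix.mul_assoc ((M m)ᴴ) _ _, hU, Matrix.mul_one]
  simp_rw [h]
  exact hM
end

section
/- Let M₀, M₁, N₀, N₁ be n×n complex matrices such that M₀·N₁ = N₁·M₀ and M₁·N₁ = N₁·M₁ (M left-commutes with N), and such that for every n×n matrix ρ: N₀·M₀·ρ·M₀ᴴ·N₀ᴴ + N₀·M₁·ρ·M₁ᴴ·N₀ᴴ = N₀·ρ·N₀ᴴ. Then for all ℂ-linear maps P, Q, R on the space of n×n complex matrices and every n×n matrix ρ: R(N₀ρN₀ᴴ) + P(M₀N₁ρN₁ᴴM₀ᴴ) + Q(M₁N₁ρN₁ᴴM₁ᴴ) = R(N₀M₀ρM₀ᴴN₀ᴴ) + P(N₁M₀ρM₀ᴴN₁ᴴ) + R(N₀M₁ρM₁ᴴN₀ᴴ)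 + Q(N₁M₁ρM₁ᴴN₁ᴴ). -/
open Matrix

theorem left_distributivity_nested_if {n : ℕ}
    (M₀ M₁ N₀ N₁ : Matrix (Fin n) (Fin n) ℂ)
    (hcomm₀ : M₀ * N₁ = N₁ * M₀) (hcomm₁ : M₁ * N₁ = N₁ * M₁)
    (hN : ∀ ρ : Matrix (Fin n) (Fin n) ℂ,
      N₀ * M₀ * ρ * M₀ᴴ * N₀ᴴ + N₀ * M₁ * ρ * M₁ᴴ * N₀ᴴ = N₀ * ρ * N₀ᴴ)
    (P Q R : Matrix (Fin n) (Fin n) ℂ →ₗ[ℂ] Matrix (Fin n) (Fin n) ℂ)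
    (ρ : Matrix (Fin n) (Fin n) ℂ) :
    R (N₀ * ρ * N₀ᴴ) + P (M₀ * N₁ * ρ * N₁ᴴ * M₀ᴴ) + Q (M₁ * N₁ * ρ * N₁ᴴ * M₁ᴴ)
      = R (N₀ * M₀ * ρ * M₀ᴴ * N₀ᴴ) + P (N₁ * M₀ * ρ * M₀ᴴ * N₁ᴴ)
        + R (N₀ * M₁ * ρ * M₁ᴴ * N₀ᴴ) + Q (N₁ * M₁ * ρ * M₁ᴴ * N₁ᴴ) := by
  have hc₀ : N₁ᴴ * M₀ᴴ = M₀ᴴ * N₁ᴴ := by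
    rw [← conjTranspose_mul, ← conjTranspose_mul, hcomm₀]
  have hc₁ : N₁ᴴ * M₁ᴴ = M₁ᴴ * N₁ᴴ := by
    rw [← conjTranspose_mul, ← conjTranspose_mul, hcomm₁]
  have hP : M₀ * N₁ * ρ * N₁ᴴ * M₀ᴴ = N₁ * M₀ * ρ * M₀ᴴ * N₁ᴴ := by
    rw [hcomm₀, mul_assoc (N₁ * M₀ * ρ), hc₀, ← mul_assoc]
  have hQ : M₁ * N₁ * ρ * N₁ᴴ * M₁ᴴ = N₁ * M₁ * ρ * M₁ᴴ * N₁ᴴ := by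
    rw [hcomm₁, mul_assoc (N₁ * M₁ * ρ), hc₁, ← mul_assoc]
  rw [hP, hQ, ← hN ρ, map_add]
  abel
end

section
/- Let M₀, M₁, N₀, N₁ be n×n complex matrices that are Hermitian idempotents with M₀ + M₁ = I and N₀ + N₁ = I (two binary projective measurements), and assume N₀·M₁ = 0 or N₀·M₀ = 0. Then for all ℂ-linear maps P, Q, R on the space of n×n complex matrices and every n×n matrix ρ: R(N₀ρN₀ᴴ) + P(M₀N₁ρN₁ᴴM₀ᴴ) + Q(M₁N₁ρN₁ᴴM₁ᴴ) = R(N₀M₀ρM₀ᴴN₀ᴴ) + P(N₁M₀ρM₀ᴴN₁ᴴ) + R(N₀M₁ρM₁ᴴN₀ᴴ) + Q(N₁M₁ρM₁ᴴN₁ᴴ). -/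
open Matrix

theorem left_distributivity_projective {n : ℕ}
    (M₀ M₁ N₀ N₁ : Matrix (Fin n) (Fin n) ℂ)
    (hM₀h : M₀ᴴ = M₀) (hM₀i : M₀ * M₀ = M₀)
    (hM₁h : M₁ᴴ = M₁) (hM₁i : M₁ * M₁ = M₁)
    (hN₀h : N₀ᴴ = N₀) (hN₀i : N₀ * N₀ = N₀)
    (hN₁h : N₁ᴴ = N₁) (hN₁i : N₁ * N₁ = N₁)
    (hMsum : M₀ + M₁ = 1) (hNsum : N₀ + N₁ = 1)
    (hent : N₀ * M₁ = 0 ∨ N₀ * M₀ = 0)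
    (P Q R : Matrix (Fin n) (Fin n) ℂ →ₗ[ℂ] Matrix (Fin n) (Fin n) ℂ)
    (ρ : Matrix (Fin n) (Fin n) ℂ) :
    R (N₀ * ρ * N₀ᴴ) + P (M₀ * N₁ * ρ * N₁ᴴ * M₀ᴴ) + Q (M₁ * N₁ * ρ * N₁ᴴ * M₁ᴴ)
      = R (N₀ * M₀ * ρ * M₀ᴴ * N₀ᴴ) + P (N₁ * M₀ * ρ * M₀ᴴ * N₁ᴴ)
        + R (N₀ * M₁ * ρ * M₁ᴴ * N₀ᴴ) + Q (N₁ * M₁ * ρ * M₁ᴴ * N₁ᴴ) := by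
  rw [hM₀h, hM₁h, hN₀h, hN₁h]
  have hN₁' : N₁ = 1 - N₀ := eq_sub_of_add_eq' hNsum
  rcases hent with h | h
  · -- N₀ * M₁ = 0
    have h' : M₁ * N₀ = 0 := by
      have := congrArg conjTranspose h
      simpa [conjTranspose_mul, hM₁h, hN₀h] using this
    have e1 : N₀ * M₀ = N₀ := by
      have h2 : N₀ * (M₀ + M₁) = N₀ * 1 := by rw [hMsum]
      simpa [mul_add, h] using h2
    have e2 : M₀ * N₀ = N₀ := by
      have h2 : (M₀ + M₁) * N₀ = 1 * N₀ := by rw [hMsum]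
      simpa [add_mul, h'] using h2
    have hc : M₀ * N₁ = N₁ * M₀ := by
      rw [hN₁', sub_mul, mul_sub, mul_one, one_mul, e1, e2]
    have hc' : M₁ * N₁ = N₁ * M₁ := by
      rw [hN₁', sub_mul, mul_sub, mul_one, one_mul, h, h']
    have ha : N₀ * M₀ * ρ * M₀ * N₀ = N₀ * ρ * N₀ := by
      rw [e1, mul_assoc (N₀ * ρ), e2]
    have hb : M₀ * N₁ * ρ * N₁ * M₀ = N₁ * M₀ * ρ * M₀ * N₁ := by
      rw [hc, mul_assoc (N₁ * M₀ * ρ), ← hc, ← mul_assoc]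
    have hq : M₁ * N₁ * ρ * N₁ * M₁ = N₁ * M₁ * ρ * M₁ * N₁ := by
      rw [hc', mul_assoc (N₁ * M₁ * ρ), ← hc', ← mul_assoc]
    have hd : N₀ * M₁ * ρ * M₁ * N₀ = 0 := by
      rw [h]; simp
    rw [ha, hb, hq, hd, map_zero, add_zero]
  · -- N₀ * M₀ = 0
    have h' : M₀ * N₀ = 0 := by
      have := congrArg conjTranspose h
      simpa [conjTranspose_mul, hM₀h, hN₀h] using this
    have e1 : N₀ * M₁ = N₀ := by
      have h2 : N₀ * (M₀ + M₁) = N₀ * 1 := by rw [hMsum]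
      simpa [mul_add, h] using h2
    have e2 : M₁ * N₀ = N₀ := by
      have h2 : (M₀ + M₁) * N₀ = 1 * N₀ := by rw [hMsum]
      simpa [add_mul, h'] using h2
    have hc : M₀ * N₁ = N₁ * M₀ := by
      rw [hN₁', sub_mul, mul_sub, mul_one, one_mul, h, h']
    have hc' : M₁ * N₁ = N₁ * M₁ := by
      rw [hN₁', sub_mul, mul_sub, mul_one, one_mul, e1, e2]
    have ha : N₀ * M₁ * ρ * M₁ * N₀ = N₀ * ρ * N₀ := by
      rw [e1, mul_assoc (N₀ * ρ), e2]
    have hb : M₀ * N₁ * ρ * N₁ * M₀ = N₁ * M₀ * ρ * M₀ * N₁ := by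
      rw [hc, mul_assoc (N₁ * M₀ * ρ), ← hc, ← mul_assoc]
    have hq : M₁ * N₁ * ρ * N₁ * M₁ = N₁ * M₁ * ρ * M₁ * N₁ := by
      rw [hc', mul_assoc (N₁ * M₁ * ρ), ← hc', ← mul_assoc]
    have hd : N₀ * M₀ * ρ * M₀ * N₀ = 0 := by
      rw [h]; simp
    rw [ha, hb, hq, hd, map_zero, zero_add]
    abel
end

section
/- Let M₀, M₁ be Hermitian idempotent n×n complex matrices with M₀ + M₁ = I (a binary projective measurement), and let P₀, P₁, Q₀, Q₁ be ℂ-linear maps on the space of n×n complex matrices such that for all i, j ∈ {0,1} and every matrix σ: P_i(M_j·σ·M_jᴴ) = M_j·(P_i σ)·M_jᴴ. Then for every n×n matrix ρ: Q₀(M₀·(P₀(M₀ρM₀ᴴ) + P₁(M₁ρM₁ᴴ))·M₀ᴴ) + Q₁(M₁·(P₀(M₀ρM₀ᴴ) + P₁(M₁ρM₁ᴴ))·M₁ᴴ) = Q₀(P₀(M₀ρM₀ᴴ)) + Q₁(P₁(M₁ρM₁ᴴ)). -/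
open Matrix

theorem sequentiality_if {n : ℕ}
    (M₀ M₁ : Matrix (Fin n) (Fin n) ℂ)
    (hM₀h : M₀ᴴ = M₀) (hM₀i : M₀ * M₀ = M₀)
    (hM₁h : M₁ᴴ = M₁) (hM₁i : M₁ * M₁ = M₁)
    (hMsum : M₀ + M₁ = 1)
    (P₀ P₁ Q₀ Q₁ : Matrix (Fin n) (Fin n) ℂ →ₗ[ℂ] Matrix (Fin n) (Fin n) ℂ)
    (hP₀₀ : ∀ σ, P₀ (M₀ * σ * M₀ᴴ) = M₀ * P₀ σ * M₀ᴴ)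
    (hP₀₁ : ∀ σ, P₀ (M₁ * σ * M₁ᴴ) = M₁ * P₀ σ * M₁ᴴ)
    (hP₁₀ : ∀ σ, P₁ (M₀ * σ * M₀ᴴ) = M₀ * P₁ σ * M₀ᴴ)
    (hP₁₁ : ∀ σ, P₁ (M₁ * σ * M₁ᴴ) = M₁ * P₁ σ * M₁ᴴ)
    (ρ : Matrix (Fin n) (Fin n) ℂ) :
    Q₀ (M₀ * (P₀ (M₀ * ρ * M₀ᴴ) + P₁ (M₁ * ρ * M₁ᴴ)) * M₀ᴴ)
      + Q₁ (M₁ * (P₀ (M₀ * ρ * M₀ᴴ) + P₁ (M₁ * ρ * M₁ᴴ)) * M₁ᴴ)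
      = Q₀ (P₀ (M₀ * ρ * M₀ᴴ)) + Q₁ (P₁ (M₁ * ρ * M₁ᴴ)) := by
  have h01 : M₀ * M₁ = 0 := by
    have h : M₀ * (M₀ + M₁) = M₀ * 1 := by rw [hMsum]
    rw [mul_add, hM₀i, mul_one, add_eq_left] at h
    exact h
  have h10 : M₁ * M₀ = 0 := by
    have h : (M₀ + M₁) * M₀ = 1 * M₀ := by rw [hMsum]
    rw [add_mul, hM₀i, one_mul, add_eq_left] at h
    exact h
  rw [hP₀₀ ρ, hP₁₁ ρ]
  simp only [hM₀h, hM₁h, mul_add, add_mul]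
  rw [show M₀ * (M₀ * P₀ ρ * M₀) * M₀ = M₀ * P₀ ρ * M₀ by
        rw [← mul_assoc, ← mul_assoc, hM₀i, mul_assoc, hM₀i],
      show M₀ * (M₁ * P₁ ρ * M₁) * M₀ = 0 by
        simp [← mul_assoc, h01],
      show M₁ * (M₀ * P₀ ρ * M₀) * M₁ = 0 by
        simp [← mul_assoc, h10],
      show M₁ * (M₁ * P₁ ρ * M₁) * M₁ = M₁ * P₁ ρ * M₁ by
        rw [← mul_assoc, ← mul_assoc, hM₁i, mul_assoc, hM₁i]]
  simp
end

section
/- Let (ψ_i)_{i ∈ Fin d} be an orthonormal family in ℂ^d (star(ψ_i) ⬝ᵥ ψ_j = 1 if i = j and 0 otherwise), set M_i := ψ_i·ψ_iᴴ (the rank-one outer product), let (C_i)_{i ∈ Fin d} be r×r complex matrices, and let W := ∑_i M_i ⊗ₖ C_i, a matrix indexed by Fin d × Fin r (⊗ₖ is the Kronecker product). Then for every family of ℂ-linear maps (P_i)_{i ∈ Fin d} on matrices indexed by Fin d × Fin r and every such matrix ρ: ∑_i P_i((M_i ⊗ₖ I_r)·W·ρ·Wᴴ·(M_i ⊗ₖ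 I_r)ᴴ) = ∑_i P_i((I_d ⊗ₖ C_i)·(M_i ⊗ₖ I_r)·ρ·(M_i ⊗ₖ I_r)ᴴ·(I_d ⊗ₖ C_i)ᴴ). -/
/-!
Orthonormality of the `ψ i` makes the projectors `M i = ψ i ψ iᴴ` mutually orthogonal idempotents,
so `(M i ⊗ 1) W = M i ⊗ C i = (1 ⊗ C i)(M i ⊗ 1)`: projecting after the quantum case statement is
the same as projecting first and then running the selected branch. Each summand of the left-hand
side is therefore `P i (X ρ Xᴴ)` with `X` either factorization, which gives the identity termwise.
-/

open Matrix Kronecker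

namespace Matrix

variable {ι l m n α : Type*} [DecidableEq ι]

theorem vecMulVec_star_mul_vecMulVec_star_of_orthonormal [Fintype n] [Semiring α] [Star α]
    {ψ : ι → n → α} (hψ : ∀ i j, star (ψ i) ⬝ᵥ ψ j = if i = j then 1 else 0) (i j : ι) :
    vecMulVec (ψ i) (star (ψ i)) * vecMulVec (ψ j) (star (ψ j)) =
      if i = j then vecMulVec (ψ j) (star (ψ j)) else 0 := by
  rw [vecMulVec_mul_vecMulVec, hψ]
  split_ifs with hij
  · subst hij
    rw [one_smul]
  · rw [zero_smul]
    ext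
    simp

section Kronecker

variable [Fintype m] [Fintype n] [DecidableEq n] [CommSemiring α]

theorem one_kronecker_mul_kronecker_one [DecidableEq m] (A : Matrix m m α) (B : Matrix n n α) :
    ((1 : Matrix m m α) ⊗ₖ B) * (A ⊗ₖ (1 : Matrix n n α)) = A ⊗ₖ B := by
  rw [← mul_kronecker_mul, one_mul, mul_one]

theorem kronecker_one_mul_sum_kronecker [Fintype ι] {M : ι → Matrix m m α}
    (hM : ∀ i j, M i * M j = if i = j then M j else 0) (C : ι → Matrix n n α) (i : ι) :
    (M i ⊗ₖ (1 : Matrix n n α)) * ∑ j, M j ⊗ₖ C j = M i ⊗ₖ C i := by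
  rw [Finset.mul_sum, Finset.sum_eq_single i]
  · rw [← mul_kronecker_mul, one_mul, hM, if_pos rfl]
  · intro j _ hji
    rw [← mul_kronecker_mul, hM, if_neg hji.symm, zero_kronecker]
  · exact fun hi => (hi (Finset.mem_univ i)).elim

end Kronecker

theorem mul_mul_mul_conjTranspose_mul_conjTranspose [Fintype m] [Fintype n] [Semiring α]
    [StarRing α] (X : Matrix l m α) (W : Matrix m n α) (ρ : Matrix n n α) :
    X * W * ρ * Wᴴ * Xᴴ = (X * W) * ρ * (X * W)ᴴ := by
  rw [conjTranspose_mul, Matrix.mul_assoc (X * W * ρ)]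

end Matrix

theorem qif_if_interplay {d r : ℕ}
    (ψ : Fin d → (Fin d → ℂ))
    (horth : ∀ i j, star (ψ i) ⬝ᵥ ψ j = if i = j then 1 else 0)
    (C : Fin d → Matrix (Fin r) (Fin r) ℂ)
    (P : Fin d → (Matrix (Fin d × Fin r) (Fin d × Fin r) ℂ →ₗ[ℂ]
                   Matrix (Fin d × Fin r) (Fin d × Fin r) ℂ))
    (ρ : Matrix (Fin d × Fin r) (Fin d × Fin r) ℂ) :
    let M : Fin d → Matrix (Fin d) (Fin d) ℂ := fun i => vecMulVec (ψ i) (star (ψ i))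
    let W : Matrix (Fin d × Fin r) (Fin d × Fin r) ℂ := ∑ i, (M i) ⊗ₖ (C i)
    ∑ i, P i ((M i ⊗ₖ (1 : Matrix (Fin r) (Fin r) ℂ)) * W * ρ * Wᴴ *
                (M i ⊗ₖ (1 : Matrix (Fin r) (Fin r) ℂ))ᴴ)
      = ∑ i, P i (((1 : Matrix (Fin d) (Fin d) ℂ) ⊗ₖ C i) *
                  (M i ⊗ₖ (1 : Matrix (Fin r) (Fin r) ℂ)) * ρ *
                  (M i ⊗ₖ (1 : Matrix (Fin r) (Fin r) ℂ))ᴴ *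
                  ((1 : Matrix (Fin d) (Fin d) ℂ) ⊗ₖ C i)ᴴ) := by
  intro M W
  refine Finset.sum_congr rfl fun i _ => congrArg (P i) ?_
  have hprojector : (M i ⊗ₖ (1 : Matrix (Fin r) (Fin r) ℂ)) * W =
      ((1 : Matrix (Fin d) (Fin d) ℂ) ⊗ₖ C i) * (M i ⊗ₖ (1 : Matrix (Fin r) (Fin r) ℂ)) := by
    rw [kronecker_one_mul_sum_kronecker (vecMulVec_star_mul_vecMulVec_star_of_orthonormal horth),
      one_kronecker_mul_kronecker_one]
  rw [mul_mul_mul_conjTranspose_mul_conjTranspose, hprojector,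
    ← mul_mul_mul_conjTranspose_mul_conjTranspose]
end

section
/- Let M₀, M₁ be n×n complex matrices with M₀ᴴ·M₀ + M₁ᴴ·M₁ = I, and let E be a ℂ-linear map on the space of n×n complex matrices such that for every positive semidefinite matrix σ, E(σ) is positive semidefinite and the real part of trace(E σ) is at most the real part of trace(σ). Then for every positive semidefinite n×n matrix ρ, the family k ↦ M₀·((E ∘ C₁)^[k] ρ)·M₀ᴴ is summable (in the natural topology of the matrix space), where C₁(τ) := M₁·τ·M₁ᴴ and ^[k] denotes k-fold iteration. -/
/-! The traces of `σₖ := (E ∘ C₁)^[k] ρ` are nonnegative reals and, by the completeness relation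
`M₀ᴴ M₀ + M₁ᴴ M₁ = 1` and trace-nonincrease of `E`, each step lowers them by at least
`tr (M₀ σₖ M₀ᴴ)`; so these traces are summable. Every entry of a positive semidefinite matrix is
bounded in norm by its trace, hence the family is absolutely summable entrywise. -/

open Matrix ComplexOrder

theorem summable_of_le_sub_succ {a b : ℕ → ℝ} (ha : ∀ k, 0 ≤ a k) (hb : ∀ k, 0 ≤ b k)
    (hab : ∀ k, a k ≤ b k - b (k + 1)) : Summable a := by
  refine summable_of_sum_range_le (c := b 0) ha fun N => ?_
  calc ∑ k ∈ Finset.range N, a k ≤ ∑ k ∈ Finset.range N, (b k - b (k + 1)) :=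
        Finset.sum_le_sum fun k _ => hab k
    _ = b 0 - b N := Finset.sum_range_sub' b N
    _ ≤ b 0 := sub_le_self _ (hb N)

namespace Matrix

variable {ι 𝕜 : Type*} [RCLike 𝕜]

theorem re_conjTranspose_mul_self_apply_self {m : Type*} [Fintype m] (B : Matrix m ι 𝕜) (i : ι) :
    RCLike.re ((Bᴴ * B) i i) = ∑ k, ‖B k i‖ ^ 2 := by
  rw [mul_apply, map_sum]
  refine Finset.sum_congr rfl fun k _ => ?_
  rw [conjTranspose_apply, RCLike.star_def, RCLike.conj_mul, ← RCLike.ofReal_pow, RCLike.ofReal_re]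

theorem two_mul_norm_conjTranspose_mul_self_apply_le {m : Type*} [Fintype m] (B : Matrix m ι 𝕜)
    (i j : ι) :
    2 * ‖(Bᴴ * B) i j‖ ≤ RCLike.re ((Bᴴ * B) i i) + RCLike.re ((Bᴴ * B) j j) := by
  rw [re_conjTranspose_mul_self_apply_self, re_conjTranspose_mul_self_apply_self,
    ← Finset.sum_add_distrib, mul_apply]
  refine (mul_le_mul_of_nonneg_left (norm_sum_le _ _) zero_le_two).trans ?_
  rw [Finset.mul_sum]
  refine Finset.sum_le_sum fun k _ => ?_
  rw [norm_mul, conjTranspose_apply, norm_star]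
  nlinarith [sq_nonneg (‖B k i‖ - ‖B k j‖)]

variable [Fintype ι]

theorem PosSemidef.exists_eq_conjTranspose_mul_self {A : Matrix ι ι 𝕜} (hA : A.PosSemidef) :
    ∃ B : Matrix ι ι 𝕜, A = Bᴴ * B := by
  classical
  open scoped MatrixOrder in
  obtain ⟨X, hX, -, hXA⟩ :=
    CFC.exists_sqrt_of_isSelfAdjoint_of_quasispectrumRestricts hA.isHermitian
      (QuasispectrumRestricts.nnreal_of_nonneg hA.nonneg)
  exact ⟨X, by rw [← star_eq_conjTranspose, hX.star_eq, hXA]⟩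

theorem PosSemidef.re_apply_le_re_trace {A : Matrix ι ι 𝕜} (hA : A.PosSemidef) (i : ι) :
    RCLike.re (A i i) ≤ RCLike.re A.trace := by
  rw [trace, map_sum]
  exact Finset.single_le_sum (f := fun j => RCLike.re (A j j))
    (fun j _ => (RCLike.nonneg_iff.mp hA.diag_nonneg).1) (Finset.mem_univ i)

theorem PosSemidef.norm_apply_le_re_trace {A : Matrix ι ι 𝕜} (hA : A.PosSemidef) (i j : ι) :
    ‖A i j‖ ≤ RCLike.re A.trace := by
  obtain ⟨B, rfl⟩ := hA.exists_eq_conjTranspose_mul_self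
  have := two_mul_norm_conjTranspose_mul_self_apply_le B i j
  linarith [hA.re_apply_le_re_trace i, hA.re_apply_le_re_trace j]

theorem summable_of_posSemidef_of_summable_re_trace {β : Type*} {f : β → Matrix ι ι 𝕜}
    (hf : ∀ k, (f k).PosSemidef) (h : Summable fun k => RCLike.re (f k).trace) : Summable f :=
  Pi.summable.2 fun i => Pi.summable.2 fun j =>
    h.of_norm_bounded fun k => (hf k).norm_apply_le_re_trace i j

theorem trace_mul_mul_conjTranspose_add_eq_trace [DecidableEq ι] {M₀ M₁ : Matrix ι ι 𝕜}
    (hM : M₀ᴴ * M₀ + M₁ᴴ * M₁ = 1) (σ : Matrix ι ι 𝕜) :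
    (M₀ * σ * M₀ᴴ).trace + (M₁ * σ * M₁ᴴ).trace = σ.trace := by
  rw [trace_mul_cycle, trace_mul_cycle M₁, ← trace_add, ← add_mul, hM, one_mul]

end Matrix

theorem while_loop_summable {n : ℕ}
    (M₀ M₁ : Matrix (Fin n) (Fin n) ℂ)
    (hM : M₀ᴴ * M₀ + M₁ᴴ * M₁ = 1)
    (E : Matrix (Fin n) (Fin n) ℂ →ₗ[ℂ] Matrix (Fin n) (Fin n) ℂ)
    (hpos : ∀ σ : Matrix (Fin n) (Fin n) ℂ, σ.PosSemidef → (E σ).PosSemidef)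
    (htr : ∀ σ : Matrix (Fin n) (Fin n) ℂ, σ.PosSemidef →
      ((E σ).trace).re ≤ (σ.trace).re)
    (ρ : Matrix (Fin n) (Fin n) ℂ) (hρ : ρ.PosSemidef) :
    Summable (fun k : ℕ => M₀ * ((fun τ => E (M₁ * τ * M₁ᴴ))^[k] ρ) * M₀ᴴ) := by
  set F : Matrix (Fin n) (Fin n) ℂ → Matrix (Fin n) (Fin n) ℂ := fun τ => E (M₁ * τ * M₁ᴴ)
  have hF : ∀ k, (F^[k] ρ).PosSemidef := fun k =>
    Function.Iterate.rec _ hρ (fun σ hσ => hpos _ (hσ.mul_mul_conjTranspose_same M₁)) k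
  refine summable_of_posSemidef_of_summable_re_trace
    (fun k => (hF k).mul_mul_conjTranspose_same M₀) ?_
  refine summable_of_le_sub_succ (b := fun k => (F^[k] ρ).trace.re)
    (fun k => ((hF k).mul_mul_conjTranspose_same M₀).trace_nonneg.1)
    (fun k => (hF k).trace_nonneg.1) fun k => ?_
  rw [Function.iterate_succ_apply', RCLike.re_to_complex]
  have hsplit := congrArg Complex.re (trace_mul_mul_conjTranspose_add_eq_trace hM (F^[k] ρ))
  have hdecay : (F (F^[k] ρ)).trace.re ≤ (M₁ * F^[k] ρ * M₁ᴴ).trace.re :=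
    htr _ ((hF k).mul_mul_conjTranspose_same M₁)
  rw [Complex.add_re] at hsplit
  linarith
end

section
/- Let M₀, M₁ be n×n complex matrices with M₀ᴴ·M₀ + M₁ᴴ·M₁ = I, let N₁ be an n×n matrix, and suppose there is c ∈ ℂ with |c| = 1 and M₀·N₁ = c • N₁. Then for every ℂ-linear map E on n×n complex matrices and every matrix ρ: ∑'_k M₀·((E ∘ C₁)^[k] (N₁·ρ·N₁ᴴ))·M₀ᴴ = N₁·ρ·N₁ᴴ, where C₁(τ) := M₁·τ·M₁ᴴ; in fact every term with k ≥ 1 vanishes. -/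
/-!
Completeness `M₀ᴴM₀ + M₁ᴴM₁ = 1` gives `(M₁N₁)ᴴ(M₁N₁) = N₁ᴴN₁ - (M₀N₁)ᴴ(M₀N₁)`, and
`M₀N₁ = cN₁` with `|c| = 1` makes the right-hand side vanish, so `M₁N₁ = 0`. Hence one pass
through the loop body sends `N₁ρN₁ᴴ` to `0`, which the linear body keeps at `0`; only the
`k = 0` term `M₀N₁ρN₁ᴴM₀ᴴ = |c|² N₁ρN₁ᴴ` survives.
-/

open Matrix

namespace Matrix

variable {𝕜 : Type*} [RCLike 𝕜] {l m n p : Type*}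

lemma conjTranspose_smul_mul_smul [Fintype m] {c : 𝕜} (hc : ‖c‖ = 1) (A : Matrix m l 𝕜)
    (B : Matrix m n 𝕜) : (c • A)ᴴ * (c • B) = Aᴴ * B := by
  have hcc : star c * c = 1 := by rw [RCLike.star_def, RCLike.conj_mul, hc]; norm_num
  rw [conjTranspose_smul, Matrix.smul_mul, Matrix.mul_smul, smul_smul, hcc, one_smul]

lemma smul_mul_mul_conjTranspose_smul [Fintype n] {c : 𝕜} (hc : ‖c‖ = 1) (N : Matrix m n 𝕜)
    (ρ : Matrix n n 𝕜) : (c • N) * ρ * (c • N)ᴴ = N * ρ * Nᴴ := by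
  have hcc : c * star c = 1 := by rw [RCLike.star_def, RCLike.mul_conj, hc]; norm_num
  rw [conjTranspose_smul, Matrix.smul_mul, Matrix.smul_mul, Matrix.mul_smul, smul_smul,
    hcc, one_smul]

lemma mul_eq_zero_of_mul_eq_smul [Fintype m] [Fintype n] [DecidableEq n] {M₀ : Matrix n n 𝕜}
    {M₁ : Matrix m n 𝕜} {N : Matrix n p 𝕜} {c : 𝕜} (hM : M₀ᴴ * M₀ + M₁ᴴ * M₁ = 1)
    (hc : ‖c‖ = 1) (hMN : M₀ * N = c • N) : M₁ * N = 0 := by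
  have h : (M₀ * N)ᴴ * (M₀ * N) + (M₁ * N)ᴴ * (M₁ * N) = Nᴴ * N :=
    calc _ = Nᴴ * (M₀ᴴ * M₀ + M₁ᴴ * M₁) * N := by
          simp only [conjTranspose_mul, Matrix.add_mul, Matrix.mul_add, Matrix.mul_assoc]
      _ = Nᴴ * N := by rw [hM, Matrix.mul_one]
  rw [hMN, conjTranspose_smul_mul_smul hc, add_eq_left] at h
  open ComplexOrder in exact conjTranspose_mul_self_eq_zero.mp h

end Matrix

theorem loop_elimination {n : ℕ}
    (M₀ M₁ N₁ : Matrix (Fin n) (Fin n) ℂ)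
    (hM : M₀ᴴ * M₀ + M₁ᴴ * M₁ = 1)
    (hc : ∃ c : ℂ, ‖c‖ = 1 ∧ M₀ * N₁ = c • N₁)
    (E : Matrix (Fin n) (Fin n) ℂ →ₗ[ℂ] Matrix (Fin n) (Fin n) ℂ)
    (ρ : Matrix (Fin n) (Fin n) ℂ) :
    (∑' k : ℕ, M₀ * ((fun τ => E (M₁ * τ * M₁ᴴ))^[k] (N₁ * ρ * N₁ᴴ)) * M₀ᴴ)
        = N₁ * ρ * N₁ᴴ ∧
    ∀ k : ℕ, 1 ≤ k →
      M₀ * ((fun τ => E (M₁ * τ * M₁ᴴ))^[k] (N₁ * ρ * N₁ᴴ)) * M₀ᴴ = 0 := by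
  obtain ⟨c, hc, hMN⟩ := hc
  have hM₁N₁ : M₁ * N₁ = 0 := mul_eq_zero_of_mul_eq_smul hM hc hMN
  set body := fun τ => E (M₁ * τ * M₁ᴴ)
  have hbody : body (N₁ * ρ * N₁ᴴ) = 0 := by simp [body, ← mul_assoc, hM₁N₁]
  have hvanish : ∀ k : ℕ, 1 ≤ k → M₀ * body^[k] (N₁ * ρ * N₁ᴴ) * M₀ᴴ = 0 := by
    rintro (_ | k) hk
    · omega
    rw [Function.iterate_succ_apply, hbody, Function.iterate_fixed (by simp [body])]
    simp
  refine ⟨?_, hvanish⟩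
  rw [tsum_eq_single 0 fun k hk => hvanish k (Nat.one_le_iff_ne_zero.mpr hk),
    Function.iterate_zero_apply]
  calc M₀ * (N₁ * ρ * N₁ᴴ) * M₀ᴴ = (M₀ * N₁) * ρ * (M₀ * N₁)ᴴ := by
        simp only [conjTranspose_mul, Matrix.mul_assoc]
    _ = N₁ * ρ * N₁ᴴ := by rw [hMN, smul_mul_mul_conjTranspose_smul hc]
end

section
/- Let M₀, M₁ be n×n complex matrices and let P, Q be ℂ-linear maps on the space of n×n complex matrices. Define G : ℕ → (Matrix n n ℂ → Matrix n n ℂ) by G 0 ρ = 0 and G (n+1) ρ = Q(M₀·ρ·M₀ᴴ) + G n (P(M₁·ρ·M₁ᴴ)). Then for all n and every matrix ρ: G n ρ = Q(∑_{k ∈ Finset.range n} M₀·((P ∘ C₁)^[k] ρ)·M₀ᴴ), where C₁(τ) := M₁·τ·M₁ᴴ. -/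
open Matrix

theorem tail_recursion_approximation {n : ℕ}
    (M₀ M₁ : Matrix (Fin n) (Fin n) ℂ)
    (P Q : Matrix (Fin n) (Fin n) ℂ →ₗ[ℂ] Matrix (Fin n) (Fin n) ℂ)
    (G : ℕ → Matrix (Fin n) (Fin n) ℂ → Matrix (Fin n) (Fin n) ℂ)
    (hG0 : ∀ ρ, G 0 ρ = 0)
    (hGs : ∀ m ρ, G (m + 1) ρ = Q (M₀ * ρ * M₀ᴴ) + G m (P (M₁ * ρ * M₁ᴴ)))
    (m : ℕ) (ρ : Matrix (Fin n) (Fin n) ℂ) :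
    G m ρ = Q (∑ k ∈ Finset.range m,
      M₀ * ((fun τ => P (M₁ * τ * M₁ᴴ))^[k] ρ) * M₀ᴴ) := by
  induction m generalizing ρ with
  | zero => simp [hG0]
  | succ m ih =>
    rw [hGs, ih, Finset.sum_range_succ', ← map_add]
    congr 1
    rw [add_comm]
    congr 1
end
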